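/- In the extended composition with wildcard receives, a non-wildcard SR action enabled at a global state σ is independent of every other action enabled at σ (including SR* actions with disjoint participant sets): each remains enabled after the other and they commute. -/

import Mathlib

/-!
Every action advances exactly its participants, and whether an action is enabled depends only on
the local states of its participants. Since each process has a unique next local action, an
enabled action that shares a participant with an enabled `SR i j` is `SR i j` itself. Hence the
two actions have disjoint participants, and actions with disjoint participants preserve each
other's enabledness and commute.
-/

/-- Local actions of an MPI process: send to a specific destination, receive
from a specific source, wildcard receive (from any source), or barrier. -/
inductive WAct (n : ℕ) where
  | send (dest : Fin n)
  | recv (src : Fin n)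
  | recvAny
  | barrier
deriving DecidableEq

/-- Global actions of the parallel composition with wildcard receives:
`B` (global barrier), `SR i j` (send from `i` matched with the specific
receive at `j`), and `SRW i j` (send from `i` matched with the wildcard
receive at `j`). -/
inductive WGAct (n : ℕ) where
  | B
  | SR (i j : Fin n)
  | SRW (i j : Fin n)
deriving DecidableEq

variable {n : ℕ} {L : Fin n → Type}

/-- Enabledness of global actions in a global state `σ` (an `n`-tuple of local
states), where `next i` gives the unique next local action of deterministic
process `i` (`none` = terminated). -/
def WEnabled (next : ∀ i, L i → Option (WAct n)) (σ : ∀ i, L i) : WGAct n → Prop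
  | .B => ∀ i, next i (σ i) = some .barrier
  | .SR i j => i ≠ j ∧ next i (σ i) = some (.send j) ∧ next j (σ j) = some (.recv i)
  | .SRW i j => i ≠ j ∧ next i (σ i) = some (.send j) ∧ next j (σ j) = some .recvAny

open scoped Classical in
/-- The global step function: `B` advances all components, while `SR i j` and
`SRW i j` advance exactly components `i` and `j`. -/
noncomputable def wstep (next : ∀ i, L i → Option (WAct n)) (adv : ∀ i, L i → L i) :
    WGAct n → (∀ i, L i) → Option (∀ i, L i)
  | .B, σ => if WEnabled next σ .B then some (fun k => adv k (σ k)) else none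
  | .SR i j, σ =>
      if WEnabled next σ (.SR i j) then
        some (Function.update (Function.update σ i (adv i (σ i))) j (adv j (σ j)))
      else none
  | .SRW i j, σ =>
      if WEnabled next σ (.SRW i j) then
        some (Function.update (Function.update σ i (adv i (σ i))) j (adv j (σ j)))
      else none

def WGAct.participants : WGAct n → Finset (Fin n)
  | .B => Finset.univ
  | .SR i j => {i, j}
  | .SRW i j => {i, j}

def advance (adv : ∀ i, L i → L i) (g : WGAct n) (σ : ∀ i, L i) (k : Fin n) : L k :=
  if k ∈ g.participants then adv k (σ k) else σ k

theorem advance_of_notMem (adv : ∀ i, L i → L i) {g : WGAct n} (σ : ∀ i, L i) {k : Fin n}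
    (hk : k ∉ g.participants) : advance adv g σ k = σ k :=
  if_neg hk

theorem advance_comm (adv : ∀ i, L i → L i) {g h : WGAct n}
    (hgh : Disjoint g.participants h.participants) (σ : ∀ i, L i) :
    advance adv g (advance adv h σ) = advance adv h (advance adv g σ) := by
  funext k
  have : k ∈ g.participants → k ∉ h.participants := fun hk => Finset.disjoint_left.1 hgh hk
  unfold advance
  split_ifs <;> tauto

theorem update_update_eq_advance (adv : ∀ i, L i → L i) (i j : Fin n) (σ : ∀ i, L i) :
    Function.update (Function.update σ i (adv i (σ i))) j (adv j (σ j)) =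
      advance adv (.SR i j) σ := by
  funext k
  by_cases hkj : k = j
  · subst hkj; simp [advance, WGAct.participants]
  by_cases hki : k = i
  · subst hki; simp [advance, WGAct.participants, Function.update_of_ne hkj]
  · simp [advance, WGAct.participants, hki, hkj]

theorem wstep_of_wEnabled {next : ∀ i, L i → Option (WAct n)} (adv : ∀ i, L i → L i)
    {σ : ∀ i, L i} {g : WGAct n} (hg : WEnabled next σ g) :
    wstep next adv g σ = some (advance adv g σ) := by
  cases g with
  | B => rw [wstep, if_pos hg]; congr 1; funext k; simp [advance, WGAct.participants]
  | SR i j | SRW i j =>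
    rw [wstep, if_pos hg]
    exact congrArg some (update_update_eq_advance adv i j σ)

theorem wEnabled_congr {next : ∀ i, L i → Option (WAct n)} {σ σ' : ∀ i, L i} {g : WGAct n}
    (h : ∀ k ∈ g.participants, σ' k = σ k) : WEnabled next σ' g ↔ WEnabled next σ g := by
  cases g <;> simp_all [WEnabled, WGAct.participants]

theorem wEnabled_advance_iff {next : ∀ i, L i → Option (WAct n)} (adv : ∀ i, L i → L i)
    {g h : WGAct n} (hgh : Disjoint g.participants h.participants) (σ : ∀ i, L i) :
    WEnabled next (advance adv g σ) h ↔ WEnabled next σ h :=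
  wEnabled_congr fun _ hk => advance_of_notMem adv σ (Finset.disjoint_right.1 hgh hk)

theorem eq_SR_of_wEnabled_of_mem {next : ∀ i, L i → Option (WAct n)} {σ : ∀ i, L i}
    {i j k : Fin n} {g : WGAct n} (hsr : WEnabled next σ (.SR i j)) (hg : WEnabled next σ g)
    (hk : k ∈ (WGAct.SR i j).participants) (hkg : k ∈ g.participants) : g = .SR i j := by
  obtain ⟨-, hi, hj⟩ := hsr
  cases g with
  | B => simp_all [WEnabled]
  | SR a b | SRW a b =>
    obtain ⟨-, ha, hb⟩ := hg
    simp only [WGAct.participants, Finset.mem_insert, Finset.mem_singleton] at hk hkg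
    rcases hk with rfl | rfl <;> rcases hkg with rfl | rfl <;> grind

theorem disjoint_participants_of_wEnabled_SR {next : ∀ i, L i → Option (WAct n)}
    {σ : ∀ i, L i} {i j : Fin n} {g : WGAct n} (hsr : WEnabled next σ (.SR i j))
    (hg : WEnabled next σ g) (hne : g ≠ .SR i j) :
    Disjoint (WGAct.SR i j).participants g.participants :=
  Finset.disjoint_left.2 fun _ hk hkg => hne (eq_SR_of_wEnabled_of_mem hsr hg hk hkg)

/-- in the extended composition with wildcard receives, a
non-wildcard `SR` action enabled at `σ` is independent of every other action
enabled at `σ`: each remains enabled after the other, and executing them in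
either order yields the same global state. -/
theorem stmt14 (next : ∀ i, L i → Option (WAct n)) (adv : ∀ i, L i → L i)
    (σ : ∀ i, L i) (i j : Fin n) (g : WGAct n)
    (hsr : WEnabled next σ (.SR i j))
    (hg : WEnabled next σ g)
    (hne : g ≠ .SR i j) :
    ∃ σ₁ σ₂,
      wstep next adv (.SR i j) σ = some σ₁ ∧
      wstep next adv g σ = some σ₂ ∧
      WEnabled next σ₁ g ∧
      WEnabled next σ₂ (.SR i j) ∧
      wstep next adv g σ₁ = wstep next adv (.SR i j) σ₂ := by
  have hdisj := disjoint_participants_of_wEnabled_SR hsr hg hne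
  have hg₁ := (wEnabled_advance_iff adv hdisj σ).2 hg
  have hsr₂ := (wEnabled_advance_iff adv hdisj.symm σ).2 hsr
  refine ⟨_, _, wstep_of_wEnabled adv hsr, wstep_of_wEnabled adv hg, hg₁, hsr₂, ?_⟩
  rw [wstep_of_wEnabled adv hg₁, wstep_of_wEnabled adv hsr₂, advance_comm adv hdisj]
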